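/- arXiv:1210.2801 — 2 statements merged into one kernel-verified Lean document; each statement's English description precedes it below -/
import Mathlib

section
/- Let G be a group of order v and D₁, D₂, D₃ be (v,k,λ)-difference sets in G with n = k - λ dividing λ. If n divides the group ring product D₁D₂D₃ in ℤ[G] (all coefficients divisible by n), then there exists a (v,k,λ)-difference set D in G such that D₁D₂D₃ = (n + λG)·D in ℤ[G]. -/
open Finset
open scoped Pointwise

/-- The formal sum `∑_{x ∈ s} x` of a finite subset of a group in the
integral group ring `ℤ[G]`. -/
noncomputable def fsum {G : Type*} [Group G] [DecidableEq G] (s : Finset G) :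
    MonoidAlgebra ℤ G :=
  ∑ x ∈ s, MonoidAlgebra.single x 1

/-- `D` is a `(v,k,λ)`-difference set in the finite group `G` (with `v = |G|`):
`|D| = k` and `D D^{(-1)} = (k-λ)·1 + λ·G` in `ℤ[G]`. -/
def IsDiffSet {G : Type*} [Group G] [Fintype G] [DecidableEq G]
    (D : Finset G) (k lam : ℕ) : Prop :=
  D.card = k ∧
    fsum D * fsum D⁻¹ = ((k : ℤ) - lam) • 1 + (lam : ℤ) • fsum (univ : Finset G)

/-!
Write `n = k - λ`, `v = |G|` and `c = n + λG`; `c` is central in `ℤ[G]` and `k² = n + λv`.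
The product `A = D₁D₂D₃` satisfies `A A^{(-1)} = c³`, so `∑ A_g = k³` and `∑ A_g²` is
the coefficient of `1` in `c³`. These two moments give `∑ (A_g - λk)(A_g - λk - n) = 0`.
Since `n ∣ λ`, each `A_g - λk` is a multiple `n m` of `n`, so every summand `n² m (m - 1)`
is nonnegative and `A_g - λk ∈ {0, n}`. Hence `A = nD + λkG = cD` for a `k`-subset `D`,
and cancelling the non-zero-divisor `c²` in `c² · DD^{(-1)} = A A^{(-1)} = c³` gives
`DD^{(-1)} = c`.

The involution `x ↦ x^{(-1)}` of `ℤ[G]` is its Hopf antipode and the augmentation its counit.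
-/

open HopfAlgebra Coalgebra

lemma Int.mul_sub_nonneg_of_dvd {n x : ℤ} (h : n ∣ x) : 0 ≤ x * (x - n) := by
  obtain ⟨m, rfl⟩ := h
  have : 0 ≤ m * (m - 1) := by
    rcases le_or_gt m 0 with hm | hm
    · exact mul_nonneg_of_nonpos_of_nonpos hm (by linarith)
    · exact mul_nonneg hm.le (by linarith)
  calc (0 : ℤ) ≤ n ^ 2 * (m * (m - 1)) := by positivity
    _ = n * m * (n * m - n) := by ring

lemma Int.eq_zero_or_eq_of_dvd_of_sum_mul_sub_eq_zero {ι : Type*} [Fintype ι] {f : ι → ℤ}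
    {n : ℤ} (hdvd : ∀ i, n ∣ f i) (hsum : ∑ i, f i * (f i - n) = 0) (i : ι) :
    f i = 0 ∨ f i = n := by
  have := (sum_eq_zero_iff_of_nonneg fun j _ => Int.mul_sub_nonneg_of_dvd (hdvd j)).mp hsum i
    (mem_univ i)
  rcases mul_eq_zero.mp this with h | h
  · exact .inl h
  · exact .inr (sub_eq_zero.mp h)

lemma counit_eq_sum_coeff {M : Type*} [Fintype M] (x : MonoidAlgebra ℤ M) :
    counit (R := ℤ) x = ∑ g, x.coeff g := by
  induction x using MonoidAlgebra.induction_linear with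
  | zero => simp
  | add x y hx hy => simp [hx, hy, sum_add_distrib]
  | single h c => simp

section GroupRing

variable {G : Type*} [Group G] [DecidableEq G]

lemma fsum_coeff (s : Finset G) (g : G) : (fsum s).coeff g = if g ∈ s then 1 else 0 := by
  simp [fsum, MonoidAlgebra.coeff_sum, Finsupp.single_apply, eq_comm]

lemma counit_fsum (s : Finset G) : counit (R := ℤ) (fsum s) = s.card := by
  simp [fsum]

lemma antipode_fsum (s : Finset G) : antipode ℤ (fsum s) = fsum s⁻¹ := by
  rw [fsum, fsum, ← image_inv_eq_inv, sum_image inv_injective.injOn, map_sum]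
  simp

lemma coeff_antipode (x : MonoidAlgebra ℤ G) (g : G) :
    (antipode ℤ x).coeff g = x.coeff g⁻¹ := by
  induction x using MonoidAlgebra.induction_linear with
  | zero => simp
  | add x y hx hy => simp [hx, hy]
  | single h c => simp [Finsupp.single_apply, inv_eq_iff_eq_inv]

lemma coeff_one_mul_antipode_self [Fintype G] (x : MonoidAlgebra ℤ G) :
    (x * antipode ℤ x).coeff 1 = ∑ g, x.coeff g ^ 2 := by
  rw [MonoidAlgebra.coeff_mul_apply_left, Finsupp.sum_fintype _ _ (by simp)]
  simp [coeff_antipode, sq]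

variable [Fintype G]

lemma mul_fsum_univ (x : MonoidAlgebra ℤ G) :
    x * fsum univ = counit (R := ℤ) x • fsum univ := by
  ext g
  rw [MonoidAlgebra.coeff_mul_apply_left, Finsupp.sum_fintype _ _ (by simp),
    MonoidAlgebra.coeff_smul_apply, counit_eq_sum_coeff]
  simp [fsum_coeff]

lemma fsum_univ_mul (x : MonoidAlgebra ℤ G) :
    fsum univ * x = counit (R := ℤ) x • fsum univ := by
  ext g
  rw [MonoidAlgebra.coeff_mul_apply_right, Finsupp.sum_fintype _ _ (by simp),
    MonoidAlgebra.coeff_smul_apply, counit_eq_sum_coeff]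
  simp [fsum_coeff]

lemma smul_one_add_smul_fsum_univ_mul (a b : ℤ) (x : MonoidAlgebra ℤ G) :
    (a • 1 + b • fsum univ) * x = a • x + (b * counit (R := ℤ) x) • fsum univ := by
  rw [add_mul, smul_mul_assoc, one_mul, smul_mul_assoc, fsum_univ_mul, smul_smul]

lemma commute_smul_one_add_smul_fsum_univ (a b : ℤ) (x : MonoidAlgebra ℤ G) :
    Commute (a • 1 + b • fsum univ) x := by
  rw [commute_iff_eq, add_mul, mul_add, smul_mul_assoc, mul_smul_comm, one_mul, mul_one,
    smul_mul_assoc, mul_smul_comm, fsum_univ_mul, mul_fsum_univ]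

lemma counit_smul_one_add_smul_fsum_univ (a b : ℤ) :
    counit (R := ℤ) (a • 1 + b • fsum (univ : Finset G)) = a + b * Fintype.card G := by
  rw [map_add, map_zsmul, map_zsmul, Bialgebra.counit_one, counit_fsum, card_univ, smul_eq_mul,
    smul_eq_mul, mul_one]

lemma coeff_smul_one_add_smul_fsum_univ_mul (a b : ℤ) (x : MonoidAlgebra ℤ G) (g : G) :
    ((a • 1 + b • fsum univ) * x).coeff g = a * x.coeff g + b * counit (R := ℤ) x := by
  rw [smul_one_add_smul_fsum_univ_mul, MonoidAlgebra.coeff_add, Finsupp.add_apply,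
    MonoidAlgebra.coeff_smul_apply, MonoidAlgebra.coeff_smul_apply, fsum_coeff,
    if_pos (mem_univ g)]
  simp

lemma antipode_smul_one_add_smul_fsum_univ (a b : ℤ) :
    antipode ℤ (a • 1 + b • fsum (univ : Finset G)) = a • 1 + b • fsum univ := by
  rw [map_add, map_zsmul, map_zsmul, antipode_one, antipode_fsum, inv_univ]

lemma isLeftRegular_smul_one_add_smul_fsum_univ {a b : ℤ} (ha : a ≠ 0)
    (hab : a + b * Fintype.card G ≠ 0) :
    IsLeftRegular (a • 1 + b • fsum (univ : Finset G)) := by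
  refine isLeftRegular_iff_right_eq_zero_of_mul.mpr fun x hx => ?_
  have hεx : counit (R := ℤ) x = 0 := by
    have := congr(counit (R := ℤ) $hx)
    rw [Bialgebra.counit_mul, counit_smul_one_add_smul_fsum_univ, map_zero] at this
    exact (mul_eq_zero.mp this).resolve_left hab
  rw [smul_one_add_smul_fsum_univ_mul, hεx, mul_zero, zero_smul, add_zero] at hx
  ext g
  have := congr(($hx).coeff g)
  rw [MonoidAlgebra.coeff_smul_apply, smul_eq_mul] at this
  simpa [ha] using this

lemma eq_smul_fsum_add_smul_fsum_univ (x : MonoidAlgebra ℤ G) {a b : ℤ}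
    (hx : ∀ g, x.coeff g - b = 0 ∨ x.coeff g - b = a) :
    x = a • fsum {g | x.coeff g - b = a} + b • fsum univ := by
  ext g
  rw [MonoidAlgebra.coeff_add, Finsupp.add_apply, MonoidAlgebra.coeff_smul_apply,
    MonoidAlgebra.coeff_smul_apply, fsum_coeff, fsum_coeff, if_pos (mem_univ g)]
  rcases hx g with h | h <;> by_cases ha : x.coeff g - b = a <;> simp [ha] <;> omega

end GroupRing

lemma mul_antipode_mul_eq {K A : Type*} [CommSemiring K] [Semiring A] [HopfAlgebra K A]
    {x y c d : A} (hx : x * antipode K x = c) (hy : y * antipode K y = d)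
    (hd : ∀ z, Commute d z) : x * y * antipode K (x * y) = c * d := by
  rw [antipode_mul_antidistrib, mul_assoc, ← mul_assoc y, hy, ← mul_assoc, ← (hd x).eq,
    mul_assoc, hx, (hd c).eq]

namespace IsDiffSet

variable {G : Type*} [Group G] [Fintype G] [DecidableEq G] {D : Finset G} {k lam : ℕ}

lemma mul_antipode (hD : IsDiffSet D k lam) :
    fsum D * antipode ℤ (fsum D) = ((k : ℤ) - lam) • 1 + (lam : ℤ) • fsum univ := by
  rw [antipode_fsum, hD.2]

lemma sq_eq (hD : IsDiffSet D k lam) : (k : ℤ) ^ 2 = (k - lam) + lam * Fintype.card G := by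
  have := congr(counit (R := ℤ) $(hD.2))
  rwa [Bialgebra.counit_mul, counit_fsum, counit_fsum, card_inv, hD.1,
    counit_smul_one_add_smul_fsum_univ, ← sq] at this

end IsDiffSet

section ProductTheorem

variable {G : Type*} [Group G] [Fintype G] [DecidableEq G] {k lam : ℕ}

lemma coeff_sub_eq_zero_or_eq_of_mul_antipode_eq_pow_three
    (hsq : (k : ℤ) ^ 2 = (k - lam) + lam * Fintype.card G) {A : MonoidAlgebra ℤ G}
    (hA : A * antipode ℤ A = (((k : ℤ) - lam) • 1 + (lam : ℤ) • fsum univ) ^ 3)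
    (hεA : counit (R := ℤ) A = k ^ 3) (hdvd : ∀ g, ((k : ℤ) - lam) ∣ A.coeff g - lam * k)
    (g : G) : A.coeff g - lam * k = 0 ∨ A.coeff g - lam * k = k - lam := by
  set n : ℤ := k - lam
  set c := n • 1 + (lam : ℤ) • fsum (univ : Finset G)
  have hεc : counit (R := ℤ) c = k ^ 2 := by rw [counit_smul_one_add_smul_fsum_univ, hsq]
  have hc : c.coeff 1 = k := by
    have := coeff_smul_one_add_smul_fsum_univ_mul n lam (1 : MonoidAlgebra ℤ G) 1
    rwa [mul_one, MonoidAlgebra.coeff_one_one, Bialgebra.counit_one, mul_one, mul_one,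
      sub_add_cancel] at this
  have hsum : ∑ g, A.coeff g = k ^ 3 := by rw [← counit_eq_sum_coeff, hεA]
  have hsum_sq : ∑ g, A.coeff g ^ 2 = n ^ 2 * k + lam * k ^ 2 * (n + k ^ 2) := by
    rw [← coeff_one_mul_antipode_self, hA, pow_three, coeff_smul_one_add_smul_fsum_univ_mul,
      coeff_smul_one_add_smul_fsum_univ_mul, Bialgebra.counit_mul, hεc, hc]
    ring
  refine Int.eq_zero_or_eq_of_dvd_of_sum_mul_sub_eq_zero hdvd ?_ g
  calc ∑ g, (A.coeff g - lam * k) * (A.coeff g - lam * k - n)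
      = ∑ g, A.coeff g ^ 2 - (2 * lam * k + n) * ∑ g, A.coeff g
          + ∑ _g : G, lam * k * (lam * k + n) := by
        rw [mul_sum, ← sum_sub_distrib, ← sum_add_distrib]
        exact sum_congr rfl fun g _ => by ring
    _ = 0 := by
        rw [hsum_sq, hsum, sum_const, card_univ, nsmul_eq_mul]
        linear_combination (-(k : ℤ) * (lam * k + n)) * hsq

theorem exists_isDiffSet_eq_mul_of_mul_antipode_eq_pow_three (hlk : lam < k)
    (hsq : (k : ℤ) ^ 2 = (k - lam) + lam * Fintype.card G) {A : MonoidAlgebra ℤ G}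
    (hA : A * antipode ℤ A = (((k : ℤ) - lam) • 1 + (lam : ℤ) • fsum univ) ^ 3)
    (hεA : counit (R := ℤ) A = k ^ 3) (hdvd : ∀ g, ((k : ℤ) - lam) ∣ A.coeff g - lam * k) :
    ∃ D : Finset G, IsDiffSet D k lam ∧
      A = (((k : ℤ) - lam) • 1 + (lam : ℤ) • fsum univ) * fsum D := by
  set n : ℤ := k - lam
  set c := n • 1 + (lam : ℤ) • fsum (univ : Finset G)
  have hn : n ≠ 0 := by omega
  set D : Finset G := {g | A.coeff g - lam * k = n}
  have hAD : A = n • fsum D + (lam * k : ℤ) • fsum univ :=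
    eq_smul_fsum_add_smul_fsum_univ A
      (coeff_sub_eq_zero_or_eq_of_mul_antipode_eq_pow_three hsq hA hεA hdvd)
  have hcard : D.card = k := by
    have := congr(counit (R := ℤ) $hAD)
    rw [hεA, map_add, map_zsmul, map_zsmul, counit_fsum, counit_fsum, card_univ, smul_eq_mul,
      smul_eq_mul] at this
    have hnD : n * D.card = n * k := by linear_combination -this + k * hsq
    exact_mod_cast mul_left_cancel₀ hn hnD
  have hAc : A = c * fsum D := by
    rw [smul_one_add_smul_fsum_univ_mul, counit_fsum, hcard, hAD]
  refine ⟨D, ⟨hcard, ?_⟩, hAc⟩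
  have hk : (k : ℤ) ^ 2 ≠ 0 := pow_ne_zero 2 (by omega)
  have hc : IsLeftRegular c := isLeftRegular_smul_one_add_smul_fsum_univ hn (hsq ▸ hk)
  apply hc.mul hc
  calc c * c * (fsum D * fsum D⁻¹) = c * (c * fsum D * fsum D⁻¹) := by simp only [mul_assoc]
    _ = c * fsum D * fsum D⁻¹ * c := (commute_smul_one_add_smul_fsum_univ _ _ _).eq
    _ = A * antipode ℤ A := by
        rw [hAc, antipode_mul_antidistrib, antipode_smul_one_add_smul_fsum_univ, antipode_fsum,
          mul_assoc (c * fsum D)]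
    _ = c * c * c := by rw [hA, pow_three']

end ProductTheorem

theorem stmt11_general {G : Type*} [Group G] [Fintype G] [DecidableEq G]
    (D₁ D₂ D₃ : Finset G) (k lam : ℕ)
    (h1 : IsDiffSet D₁ k lam) (h2 : IsDiffSet D₂ k lam) (h3 : IsDiffSet D₃ k lam)
    (hdvd : (k - lam) ∣ lam)
    (hdiv : ∃ E : MonoidAlgebra ℤ G,
      fsum D₁ * fsum D₂ * fsum D₃ = ((k : ℤ) - lam) • E) :
    ∃ D : Finset G, IsDiffSet D k lam ∧
      fsum D₁ * fsum D₂ * fsum D₃ =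
        (((k : ℤ) - lam) • 1 + (lam : ℤ) • fsum (univ : Finset G)) * fsum D := by
  obtain ⟨E, hE⟩ := hdiv
  rcases Nat.eq_zero_or_pos (k - lam) with hn | hn
  · obtain rfl : lam = 0 := Nat.eq_zero_of_zero_dvd (hn ▸ hdvd)
    obtain rfl : k = 0 := by omega
    obtain rfl : D₁ = ∅ := card_eq_zero.mp h1.1
    exact ⟨∅, ⟨rfl, by simp [fsum]⟩, by simp [fsum]⟩
  have hlk : lam < k := by omega
  have hcentral := commute_smul_one_add_smul_fsum_univ (G := G) ((k : ℤ) - lam) lam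
  refine exists_isDiffSet_eq_mul_of_mul_antipode_eq_pow_three hlk h1.sq_eq ?_ ?_ fun g => ?_
  · rw [pow_three', mul_antipode_mul_eq (mul_antipode_mul_eq h1.mul_antipode h2.mul_antipode
      hcentral) h3.mul_antipode hcentral]
  · rw [Bialgebra.counit_mul, Bialgebra.counit_mul, counit_fsum, counit_fsum, counit_fsum, h1.1,
      h2.1, h3.1]
    ring
  · have hlam : ((k : ℤ) - lam) ∣ lam := by
      rw [← Nat.cast_sub hlk.le]
      exact Int.natCast_dvd_natCast.mpr hdvd
    rw [hE, MonoidAlgebra.coeff_smul_apply, smul_eq_mul]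
    exact dvd_sub (dvd_mul_right _ _) (dvd_mul_of_dvd_left hlam _)

/-- if `D₁, D₂, D₃` are `(v,k,λ)`-difference sets with
`n = k - λ` dividing `λ`, and `n` divides the group ring product `D₁D₂D₃`,
then there is a `(v,k,λ)`-difference set `D` with `D₁D₂D₃ = (n + λG)·D`. -/
theorem stmt11 {G : Type*} [Group G] [Fintype G] [DecidableEq G]
    (D₁ D₂ D₃ : Finset G) (k lam : ℕ) (hlk : lam ≤ k)
    (h1 : IsDiffSet D₁ k lam) (h2 : IsDiffSet D₂ k lam) (h3 : IsDiffSet D₃ k lam)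
    (hdvd : (k - lam) ∣ lam)
    (hdiv : ∃ E : MonoidAlgebra ℤ G,
      fsum D₁ * fsum D₂ * fsum D₃ = ((k : ℤ) - lam) • E) :
    ∃ D : Finset G, IsDiffSet D k lam ∧
      fsum D₁ * fsum D₂ * fsum D₃ =
        (((k : ℤ) - lam) • 1 + (lam : ℤ) • fsum (univ : Finset G)) * fsum D :=
  stmt11_general D₁ D₂ D₃ k lam h1 h2 h3 hdvd hdiv
end

section
/- Let q be an odd prime power and l an odd positive integer. Let D be a projective half-point set in 𝔽_{q^l}^* over 𝔽_q, i.e., D is a union of cosets of the subgroup S of nonzero squares of 𝔽_q, and |D ∩ c| = (q-1)/2 for every coset c of 𝔽_q^* in 𝔽_{q^l}^*. Then |D| = (q^l - 1)/2, and for every g ∈ 𝔽_{q^l}^* and primitive element ω of 𝔽_q: |gD ∩ R| + |gω^{-1}D ∩ R| = q^{l-1}, where R = {x ∈ 𝔽_{q^l}^* : tr_{q^l/q}(x) = 1}. -/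
open Finset
open scoped Pointwise Classical

/-- The relative trace `x ↦ ∑_{i<l} x^{q^i}`. -/
def relTrace {F : Type*} [CommRing F] (q l : ℕ) (x : F) : F :=
  ∑ i ∈ Finset.range l, x ^ q ^ i

/-- The embedding `𝔽_q^* → 𝔽_{q^l}^*`. -/
def unitsMapAlg (K F : Type*) [Field K] [Field F] [Algebra K F] : Kˣ →* Fˣ :=
  Units.map (algebraMap K F : K →+* F).toMonoidHom

/-- `D ⊆ 𝔽_{q^l}^*` is a projective half-point set over `𝔽_q`: it is a union of
cosets of the group of nonzero squares of `𝔽_q`, and it meets every coset of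
`𝔽_q^*` in exactly `(q-1)/2` elements. -/
def IsHalfPointSet (K F : Type*) [Field K] [Field F] [Fintype K] [Fintype F]
    [Algebra K F] (D : Finset Fˣ) : Prop :=
  (∀ x ∈ D, ∀ y : Kˣ, IsSquare y → x * unitsMapAlg K F y ∈ D) ∧
    ∀ g : Fˣ,
      (D.filter (fun x : Fˣ => ∃ y : Kˣ, x = g * unitsMapAlg K F y)).card =
        (Fintype.card K - 1) / 2

/-!
Since `ω` generates `𝔽_q^*`, every `y ∈ 𝔽_q^*` is a square or `ω` times a square, so whether
`x * y` lies in `D` is decided by whether `x ∈ D` or `x * ω ∈ D`. If these two agreed, the coset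
`x 𝔽_q^*` would meet `D` in `0` or `q - 1` points rather than `(q - 1) / 2`; hence exactly one of
`x`, `x * ω` lies in `D`, i.e. `gD` and `gω⁻¹D` partition `𝔽_{q^l}^*`, and the two counts add up
to `|R|`. Since `relTrace` is the trace of `𝔽_{q^l} / 𝔽_q`, a surjective `𝔽_q`-linear form, its
fibres all have `q^{l-1}` elements. Finally `|D|` follows by double counting pairs (point of `D`,
coset of `𝔽_q^*` containing it).
-/

theorem isSquare_or_isSquare_inv_mul {M : Type*} [Group M] {ω : M}
    (hω : ∀ z : M, z ∈ Subgroup.zpowers ω) (y : M) : IsSquare y ∨ IsSquare (ω⁻¹ * y) := by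
  obtain ⟨k, rfl⟩ := Subgroup.mem_zpowers_iff.mp (hω y)
  rcases Int.even_or_odd' k with ⟨s, rfl | rfl⟩
  · exact .inl ⟨ω ^ s, by rw [two_mul, zpow_add]⟩
  · exact .inr ⟨ω ^ s, by rw [zpow_add_one, ← mul_assoc, two_mul, zpow_add]; group⟩

section Cosets

variable {G M : Type*} [CommGroup G] [Group M] {f : M →* G} {D : Finset G}

theorem mul_mem_iff_of_isSquare (hD : ∀ x ∈ D, ∀ y, IsSquare y → x * f y ∈ D) {x : G} {y : M}
    (hy : IsSquare y) : x * f y ∈ D ↔ x ∈ D := by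
  refine ⟨fun h => ?_, fun h => hD x h y hy⟩
  simpa using hD _ h y⁻¹ hy.inv

theorem mul_mem_iff_or (hD : ∀ x ∈ D, ∀ y, IsSquare y → x * f y ∈ D) {ω : M}
    (hω : ∀ z : M, z ∈ Subgroup.zpowers ω) (x : G) (y : M) :
    (x * f y ∈ D ↔ x ∈ D) ∨ (x * f y ∈ D ↔ x * f ω ∈ D) := by
  refine (isSquare_or_isSquare_inv_mul hω y).imp (mul_mem_iff_of_isSquare hD) fun hy => ?_
  rw [← mul_mem_iff_of_isSquare hD hy (x := x * f ω), mul_assoc, ← map_mul, mul_inv_cancel_left]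

theorem card_filter_coset_eq_zero_or_card [DecidableEq G] [Fintype M]
    (hD : ∀ x ∈ D, ∀ y, IsSquare y → x * f y ∈ D) {ω : M}
    (hω : ∀ z : M, z ∈ Subgroup.zpowers ω) (hf : Function.Injective f) {x : G}
    (hx : x ∈ D ↔ x * f ω ∈ D) :
    #(D.filter fun z => ∃ y, z = x * f y) = 0 ∨
      #(D.filter fun z => ∃ y, z = x * f y) = Fintype.card M := by
  have hcoset : ∀ y, x * f y ∈ D ↔ x ∈ D := fun y =>
    (mul_mem_iff_or hD hω x y).elim id (·.trans hx.symm)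
  by_cases hxD : x ∈ D
  · refine .inr ?_
    have : D.filter (fun z => ∃ y, z = x * f y) = univ.image (fun y => x * f y) := by
      ext z
      simp only [mem_filter, mem_image, mem_univ, true_and]
      exact ⟨fun ⟨_, y, hy⟩ => ⟨y, hy.symm⟩, fun ⟨y, hy⟩ => ⟨hy ▸ (hcoset y).mpr hxD, y, hy.symm⟩⟩
    rw [this, card_image_of_injective _ fun a b h => hf (mul_left_cancel h), card_univ]
  · refine .inl (card_eq_zero.mpr (filter_eq_empty_iff.mpr ?_))
    rintro _ hz ⟨y, rfl⟩
    exact hxD ((hcoset y).mp hz)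

theorem mem_iff_mul_notMem [DecidableEq G] [Fintype M]
    (hD : ∀ x ∈ D, ∀ y, IsSquare y → x * f y ∈ D) {ω : M}
    (hω : ∀ z : M, z ∈ Subgroup.zpowers ω) (hf : Function.Injective f) {k : ℕ}
    (hk : ∀ g, #(D.filter fun x => ∃ y, x = g * f y) = k) (hk0 : k ≠ 0)
    (hkM : k ≠ Fintype.card M) (x : G) : x ∈ D ↔ x * f ω ∉ D := by
  by_contra hx
  rcases card_filter_coset_eq_zero_or_card hD hω hf (not_iff_not.mp (not_iff.mp hx)) with h | h <;>
    rw [hk] at h <;> contradiction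

theorem card_mul_card_eq_of_card_filter_coset [DecidableEq G] [Fintype G] [Fintype M]
    (hf : Function.Injective f) {k : ℕ} (hk : ∀ g, #(D.filter fun x => ∃ y, x = g * f y) = k) :
    #D * Fintype.card M = Fintype.card G * k := by
  refine (card_mul_eq_card_mul (s := univ) (fun g x => ∃ y, x = g * f y)
    (fun g _ => hk g) fun x _ => ?_).symm
  have : univ.bipartiteBelow (fun g x => ∃ y, x = g * f y) x =
      univ.image fun y => x * (f y)⁻¹ := by
    ext g
    simp [bipartiteBelow, eq_mul_inv_iff_mul_eq, eq_comm]
  rw [this, card_image_of_injective _ fun a b h => hf (inv_injective (mul_left_cancel h)),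
    card_univ]

end Cosets

theorem card_image_mul_inter_add_card_image_mul_inter {G : Type*} [CommGroup G] [DecidableEq G]
    {D R : Finset G} {a : G} (hD : ∀ x, x ∈ D ↔ x * a ∉ D) (g : G) :
    #(D.image (fun x => g * x) ∩ R) + #(D.image (fun x => g * a⁻¹ * x) ∩ R) = #R := by
  have : D.image (fun x => g * a⁻¹ * x) ∩ R = R \ D.image (fun x => g * x) := by
    ext x
    rw [image_mul_left, image_mul_left, mem_inter, mem_sdiff, mem_preimage, mem_preimage,
      show (g * a⁻¹)⁻¹ * x = g⁻¹ * x * a by rw [mul_inv_rev, inv_inv]; ac_rfl]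
    have := hD (g⁻¹ * x)
    tauto
  rw [this, inter_comm, card_inter_add_card_sdiff]

theorem card_fiber_mul_card_eq_card {V W : Type*} [AddGroup V] [Fintype V] [AddMonoid W]
    [Fintype W] [DecidableEq W] (f : V →+ W) (hf : Function.Surjective f) (c : W) :
    #{x | f x = c} * Fintype.card W = Fintype.card V := by
  calc #{x | f x = c} * Fintype.card W = ∑ d : W, #{x | f x = d} := by
        rw [sum_congr rfl fun d _ => AddMonoidHom.card_fiber_eq_of_mem_range f (hf d) (hf c),
          sum_const, card_univ, smul_eq_mul, mul_comm]
    _ = Fintype.card V := (card_eq_sum_card_fiberwise fun _ _ => mem_univ _).symm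

theorem card_filter_units_eq {M₀ : Type*} [GroupWithZero M₀] [Fintype M₀] {p : M₀ → Prop}
    [DecidablePred p] (h0 : ¬p 0) : #{x : M₀ˣ | p x} = #{x | p x} := by
  refine card_bij (fun x _ => (x : M₀)) (by simp) (fun _ _ _ _ => Units.ext) fun x hx => ?_
  have hx0 : x ≠ 0 := by
    rintro rfl
    exact h0 (mem_filter.mp hx).2
  exact ⟨Units.mk0 x hx0, by simpa using hx, rfl⟩

section RelTrace

variable {K F : Type*} [Field K] [Fintype K] [Field F] [Fintype F] [Algebra K F] {q l : ℕ}

theorem relTrace_eq_algebraMap_trace (hq : Fintype.card K = q) (hF : Fintype.card F = q ^ l)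
    (x : F) : relTrace q l x = algebraMap K F (Algebra.trace K F x) := by
  have hfinrank : Module.finrank K F = l :=
    Nat.pow_right_injective (hq ▸ Fintype.one_lt_card (α := K))
      (show q ^ _ = q ^ l by rw [← hF, ← hq, Module.card_eq_pow_finrank (K := K) (V := F)])
  rw [FiniteField.algebraMap_trace_eq_sum_pow, hfinrank, Nat.card_eq_fintype_card, hq, relTrace]

theorem card_relTrace_eq_one (hq : Fintype.card K = q) (hF : Fintype.card F = q ^ l) :
    #{x : Fˣ | relTrace q l (x : F) = 1} = q ^ (l - 1) := by
  have htrace (x : F) : relTrace q l x = 1 ↔ Algebra.trace K F x = 1 := by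
    rw [relTrace_eq_algebraMap_trace hq hF, FaithfulSMul.algebraMap_eq_one_iff]
  have hl : l ≠ 0 := by
    rintro rfl
    exact (Fintype.one_lt_card (α := F)).ne' (by rw [hF, pow_zero])
  have hfiber := card_fiber_mul_card_eq_card (Algebra.trace K F).toAddMonoidHom
    (Algebra.trace_surjective K F) 1
  rw [hq, hF, ← pow_sub_one_mul hl] at hfiber
  rw [card_filter_units_eq (p := fun x : F => relTrace q l x = 1) (by simp [htrace]),
    ← Nat.eq_of_mul_eq_mul_right (hq ▸ Fintype.card_pos) hfiber]
  simp only [htrace]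
  rfl

end RelTrace

theorem stmt13_general {K F : Type*} [Field K] [Field F] [Fintype K] [Fintype F]
    [Algebra K F] (q l : ℕ) (hq : Fintype.card K = q) (hqodd : Odd q)
    (hF : Fintype.card F = q ^ l)
    (D : Finset Fˣ) (hD : IsHalfPointSet K F D) :
    D.card = (q ^ l - 1) / 2 ∧
    ∀ g : Fˣ, ∀ ω : Kˣ, (∀ z : Kˣ, z ∈ Subgroup.zpowers ω) →
      ((D.image (fun x => g * x)) ∩
          (univ : Finset Fˣ).filter (fun x : Fˣ => relTrace q l (x : F) = 1)).card +
        ((D.image (fun x => g * (unitsMapAlg K F ω)⁻¹ * x)) ∩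
          (univ : Finset Fˣ).filter (fun x : Fˣ => relTrace q l (x : F) = 1)).card =
      q ^ (l - 1) := by
  obtain ⟨hsq, hcoset⟩ := hD
  have hinj : Function.Injective (unitsMapAlg K F) := fun a b h =>
    Units.ext ((algebraMap K F).injective (congrArg Units.val h))
  obtain ⟨t, rfl⟩ := hqodd
  have ht : t ≠ 0 := by
    have := Fintype.one_lt_card (α := K)
    omega
  have hKunits : Fintype.card Kˣ = 2 * t := by
    rw [Fintype.card_units, hq, Nat.add_sub_cancel]
  rw [hq, show (2 * t + 1 - 1) / 2 = t by omega] at hcoset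
  constructor
  · have hcount := card_mul_card_eq_of_card_filter_coset hinj hcoset
    rw [hKunits, Fintype.card_units, hF, ← mul_assoc, mul_comm _ 2] at hcount
    have hdouble := Nat.eq_of_mul_eq_mul_right (Nat.pos_of_ne_zero ht) hcount
    omega
  · intro g ω hω
    have hkM : t ≠ Fintype.card Kˣ := by omega
    have hkey := mem_iff_mul_notMem hsq hω hinj hcoset ht hkM
    rw [← card_relTrace_eq_one hq hF]
    exact card_image_mul_inter_add_card_image_mul_inter hkey g

/-- a projective half-point set `D` in `𝔽_{q^l}^*` over `𝔽_q`
(`q` odd, `l` odd) has `|D| = (q^l-1)/2`, and for every `g ∈ 𝔽_{q^l}^*` and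
every primitive element `ω` of `𝔽_q`,
`|gD ∩ R| + |gω⁻¹D ∩ R| = q^{l-1}` where `R = {x : tr_{q^l/q}(x) = 1}`. -/
theorem stmt13 {K F : Type*} [Field K] [Field F] [Fintype K] [Fintype F]
    [Algebra K F] (q l : ℕ) (hq : Fintype.card K = q) (hqodd : Odd q)
    (hF : Fintype.card F = q ^ l) (hl : Odd l)
    (D : Finset Fˣ) (hD : IsHalfPointSet K F D) :
    D.card = (q ^ l - 1) / 2 ∧
    ∀ g : Fˣ, ∀ ω : Kˣ, (∀ z : Kˣ, z ∈ Subgroup.zpowers ω) →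
      ((D.image (fun x => g * x)) ∩
          (univ : Finset Fˣ).filter (fun x : Fˣ => relTrace q l (x : F) = 1)).card +
        ((D.image (fun x => g * (unitsMapAlg K F ω)⁻¹ * x)) ∩
          (univ : Finset Fˣ).filter (fun x : Fˣ => relTrace q l (x : F) = 1)).card =
      q ^ (l - 1) :=
  stmt13_general q l hq hqodd hF D hD
end
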